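/- If T is a finite computation tree of a PARS with root a, then [(1,a)] reduces to supp(T) by finitely many parallel evolution steps: [(1,a)] ⇒_P* supp(T). -/
import Mathlib


open Relation
open scoped NNReal

abbrev PDist (A : Type) := List (ℝ≥0 × A)

namespace PPARS

variable {A X : Type}

/-- Total weight of a list distribution. -/
def weight (D : PDist A) : ℝ≥0 := (D.map Prod.fst).sum

/-- Scale every weight of a distribution by `α`. -/
def scale (α : ℝ≥0) (D : PDist A) : PDist A := D.map (fun pa => (α * pa.1, pa.2))

open Classical in
/-- Total weight that `D` assigns to the element `a`. -/
noncomputable def wt (D : PDist A) (a : A) : ℝ≥0 :=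
  (D.map (fun pa => if pa.2 = a then pa.1 else 0)).sum

/-- The Flip rule, closed under list contexts. -/
inductive FlipS : PDist A → PDist A → Prop
  | mk (E₁ E₂ : PDist A) (p q : ℝ≥0) (a b : A) :
      FlipS (E₁ ++ [(p,a),(q,b)] ++ E₂) (E₁ ++ [(q,b),(p,a)] ++ E₂)

/-- The Join rule, closed under list contexts. -/
inductive JoinS : PDist A → PDist A → Prop
  | mk (E₁ E₂ : PDist A) (p q : ℝ≥0) (a : A) :
      JoinS (E₁ ++ [(p,a),(q,a)] ++ E₂) (E₁ ++ [(p+q,a)] ++ E₂)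

/-- The Split rule, closed under list contexts. -/
inductive SplitS : PDist A → PDist A → Prop
  | mk (E₁ E₂ : PDist A) (p q : ℝ≥0) (a : A) :
      SplitS (E₁ ++ [(p+q,a)] ++ E₂) (E₁ ++ [(p,a),(q,a)] ++ E₂)

/-- One `∼`-step: congruence closure of Flip, Join and Split. -/
def SimStep (D E : PDist A) : Prop := FlipS D E ∨ JoinS D E ∨ SplitS D E

/-- One Flip-or-Join step. -/
def FJ (D E : PDist A) : Prop := FlipS D E ∨ JoinS D E

/-- Distribution equivalence `≈`. -/
def DEquiv : PDist A → PDist A → Prop := ReflTransGen SimStep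

/-- Parallel evolution `⇒_P` for a PARS relation `R`. -/
inductive PEvol (R : A → PDist A → Prop) : PDist A → PDist A → Prop
  | nil : PEvol R [] []
  | keep {ds ds' : PDist A} (p : ℝ≥0) (a : A) :
      PEvol R ds ds' → PEvol R ((p,a) :: ds) ((p,a) :: ds')
  | evolve {a : A} {D ds ds' : PDist A} (p : ℝ≥0) :
      R a D → PEvol R ds ds' → PEvol R ((p,a) :: ds) (scale p D ++ ds')

/-- Proper parallel evolution `⇒_P¹`: at least one element evolves. -/
inductive PEvol1 (R : A → PDist A → Prop) : PDist A → PDist A → Prop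
  | evolve {a : A} {D ds ds' : PDist A} (p : ℝ≥0) :
      R a D → PEvol R ds ds' → PEvol1 R ((p,a) :: ds) (scale p D ++ ds')
  | keep {ds ds' : PDist A} (p : ℝ≥0) (a : A) :
      PEvol1 R ds ds' → PEvol1 R ((p,a) :: ds) ((p,a) :: ds')

/-- The determinisation relation `↠ = ⇒_P ∪ ≈`. -/
def Red (R : A → PDist A → Prop) (D E : PDist A) : Prop := PEvol R D E ∨ DEquiv D E

/-- `R` defines a PARS: successor distributions are normalised. -/
def IsPARS (R : A → PDist A → Prop) : Prop := ∀ a D, R a D → weight D = 1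

/-- A terminal element has no successor distribution. -/
def Terminal (R : A → PDist A → Prop) (a : A) : Prop := ∀ D, ¬ R a D

/-- A terminal distribution contains only terminal elements. -/
def TerminalD (R : A → PDist A → Prop) (D : PDist A) : Prop := ∀ pa ∈ D, Terminal R pa.2

/-- Classical confluence of a relation. -/
def Confluent (r : X → X → Prop) : Prop :=
  ∀ a b c, ReflTransGen r a b → ReflTransGen r a c →
    ∃ d, ReflTransGen r b d ∧ ReflTransGen r c d

/-- Raw (finite) computation trees. -/
inductive CTree (A : Type) where
  | leaf (a : A)
  | node (a : A) (cs : List (ℝ≥0 × CTree A))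

def CTree.root : CTree A → A
  | .leaf a => a
  | .node a _ => a

/-- `IsTree R t a`: `t` is a computation tree of the PARS `R` with root `a`. -/
inductive IsTree (R : A → PDist A → Prop) : CTree A → A → Prop
  | leaf (a : A) : IsTree R (.leaf a) a
  | node (a : A) (cs : List (ℝ≥0 × CTree A)) :
      R a (cs.map fun x => (x.1, x.2.root)) →
      (∀ x ∈ cs, IsTree R x.2 x.2.root) →
      IsTree R (.node a cs) a

mutual
/-- Support of a computation tree. -/
def supp : CTree A → PDist A
  | .leaf a => [(1, a)]
  | .node _ cs => suppL cs
def suppL : List (ℝ≥0 × CTree A) → PDist A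
  | [] => []
  | (p, t) :: ts => scale p (supp t) ++ suppL ts
end

/-- A tree is maximal when all its leaves are terminal elements. -/
inductive MaximalT (R : A → PDist A → Prop) : CTree A → Prop
  | leaf (a : A) : Terminal R a → MaximalT R (.leaf a)
  | node (a : A) (cs : List (ℝ≥0 × CTree A)) :
      (∀ x ∈ cs, MaximalT R x.2) → MaximalT R (.node a cs)

end PPARS



open PPARS Relation in
theorem pevol_refl {A : Type} (R : A → PDist A → Prop) : ∀ D : PDist A, PEvol R D D := by
  intro D; induction D with
  | nil => exact PEvol.nil
  | cons pa ds ih => exact PEvol.keep pa.1 pa.2 ih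

open PPARS Relation in
theorem pevol_append {A : Type} {R : A → PDist A → Prop} {D D' E E' : PDist A}
    (h1 : PEvol R D D') (h2 : PEvol R E E') : PEvol R (D ++ E) (D' ++ E') := by
  induction h1 with
  | nil => simpa using h2
  | keep p a _ ih => exact PEvol.keep p a ih
  | evolve p hr _ ih =>
      rw [List.cons_append, List.append_assoc]
      exact PEvol.evolve p hr ih

open PPARS Relation in
theorem pevol_scale {A : Type} {R : A → PDist A → Prop} {D D' : PDist A} (q : ℝ≥0)
    (h : PEvol R D D') : PEvol R (PPARS.scale q D) (PPARS.scale q D') := by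
  induction h with
  | nil => exact PEvol.nil
  | keep p a _ ih => exact PEvol.keep (q * p) a ih
  | @evolve a D ds ds' p hr _ ih =>
      have heq : PPARS.scale q (PPARS.scale p D ++ ds') = PPARS.scale (q * p) D ++ PPARS.scale q ds' := by
        simp [PPARS.scale, mul_assoc]
      rw [show PPARS.scale q ((p, a) :: ds) = (q * p, a) :: PPARS.scale q ds from rfl, heq]
      exact PEvol.evolve (q * p) hr ih

open PPARS Relation in
theorem rtg_pevol_append {A : Type} {R : A → PDist A → Prop} {D D' E E' : PDist A}
    (h1 : ReflTransGen (PEvol R) D D') (h2 : ReflTransGen (PEvol R) E E') :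
    ReflTransGen (PEvol R) (D ++ E) (D' ++ E') := by
  have t1 : ReflTransGen (PEvol R) (D ++ E) (D' ++ E) := by
    induction h1 with
    | refl => exact .refl
    | tail _ h ih => exact ih.tail (pevol_append h (pevol_refl R E))
  refine t1.trans ?_
  induction h2 with
  | refl => exact .refl
  | tail _ h ih => exact ih.tail (pevol_append (pevol_refl R D') h)

open PPARS Relation in
theorem rtg_pevol_scale {A : Type} {R : A → PDist A → Prop} {D D' : PDist A} (q : ℝ≥0)
    (h : ReflTransGen (PEvol R) D D') :
    ReflTransGen (PEvol R) (PPARS.scale q D) (PPARS.scale q D') := by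
  induction h with
  | refl => exact .refl
  | tail _ h ih => exact ih.tail (pevol_scale q h)

open PPARS Relation in
/-- If `t` is a finite computation tree with root `a`, then `[(1,a)] ⇒_P* supp(t)`. -/
theorem tree_sim {A : Type} (R : A → PDist A → Prop) (hR : IsPARS R)
    {t : CTree A} {a : A} (ht : IsTree R t a) :
    ReflTransGen (PEvol R) [(1, a)] (supp t) := by
  induction ht with
  | leaf a => exact .refl
  | node a cs hr hts ih =>
      have step1 : PEvol R [(1, a)] (PPARS.scale 1 (cs.map fun x => (x.1, x.2.root)) ++ []) :=
        PEvol.evolve 1 hr PEvol.nil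
      have hsc : PPARS.scale 1 (cs.map fun x => (x.1, x.2.root)) ++ []
          = cs.map fun x => (x.1, x.2.root) := by
        simp [PPARS.scale]
      rw [hsc] at step1
      refine ReflTransGen.head step1 ?_
      show ReflTransGen (PEvol R) _ (suppL cs)
      have key : ∀ cs' : List (ℝ≥0 × CTree A),
          (∀ x ∈ cs', ReflTransGen (PEvol R) [(1, x.2.root)] (supp x.2)) →
          ReflTransGen (PEvol R) (cs'.map fun x => (x.1, x.2.root)) (suppL cs') := by
        intro cs'
        induction cs' with
        | nil => intro _; exact .refl
        | cons x xs ihx =>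
            intro h
            have hx' : ReflTransGen (PEvol R) [(x.1, x.2.root)] (PPARS.scale x.1 (supp x.2)) := by
              have := rtg_pevol_scale x.1 (h x (by simp))
              simpa [PPARS.scale] using this
            have hxs := ihx (fun y hy => h y (by simp [hy]))
            simpa [suppL] using rtg_pevol_append hx' hxs
      exact key cs (fun x hx => ih x hx)
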